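/- arXiv:2412.00572 — 6 statements merged into one kernel-verified Lean document; each statement's English description precedes it below -/
import Mathlib

section
/- Let 0 < ε < 1/4. Let b, h, δ be real numbers with b > 0, h > b/2, and √(b² + 4h²) < 3. In the Euclidean plane ℝ² set p₁ = (0, 0), p₂ = (b, 0), q* = (b/2, −h) and q = (b/2 + δ, −h), so that the triangle with vertices p₁, p₂, q* is the isosceles triangle with the same base and height as the triangle with vertices p₁, p₂, q, and dist(p₁, q*) + dist(p₂, q*) = √(b² + 4h²) < 3 with both slanted sides of the isosceles triangle having slope exceeding 1 in absolute value. If |δ| ≥ √(13ε/2), then dist(p₁, q) + dist(p₂, q) > √(b² + 4h²) + 2ε. -/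
/-!
Let `s = √((b/2)² + h²)` and `w = b/2 + h i`. The products of `w` and `w̄` with the two slanted
sides, read as complex numbers of moduli `d₁` and `d₂`, have real parts `s² ± δb/2` and the same
imaginary part `hδ`, so the triangle inequality in `ℂ` gives `s (d₁ + d₂) ≥ 2 √(s⁴ + h²δ²)`.
As `h² > s²/2`, `δ² ≥ 13ε/2`, `2s < 3` and `ε < 1/4`, the right side exceeds `2 s (s + ε)`.
-/

open Complex ComplexConjugate in
theorem two_mul_sqrt_le_mul_sqrt_add_sqrt (a h δ : ℝ) :
    2 * √((a ^ 2 + h ^ 2) ^ 2 + (h * δ) ^ 2) ≤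
      √(a ^ 2 + h ^ 2) * (√((a + δ) ^ 2 + h ^ 2) + √((a - δ) ^ 2 + h ^ 2)) := by
  set w : ℂ := a + h * I
  have hsum : w * ((a + δ : ℝ) + (-h : ℝ) * I) + conj w * ((a - δ : ℝ) + h * I) =
      ((2 * (a ^ 2 + h ^ 2) : ℝ) + (2 * (h * δ) : ℝ) * I) := by
    apply Complex.ext <;> simp [w, sq] <;> ring
  have htri := norm_add_le (w * ((a + δ : ℝ) + (-h : ℝ) * I)) (conj w * ((a - δ : ℝ) + h * I))
  rw [hsum, norm_mul, norm_mul, RCLike.norm_conj, norm_add_mul_I, norm_add_mul_I, norm_add_mul_I,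
    norm_add_mul_I, neg_sq] at htri
  calc 2 * √((a ^ 2 + h ^ 2) ^ 2 + (h * δ) ^ 2)
      = √((2 * (a ^ 2 + h ^ 2)) ^ 2 + (2 * (h * δ)) ^ 2) := by
        rw [show (2 * (a ^ 2 + h ^ 2)) ^ 2 + (2 * (h * δ)) ^ 2
            = 2 ^ 2 * ((a ^ 2 + h ^ 2) ^ 2 + (h * δ) ^ 2) by ring, Real.sqrt_mul' _ (by positivity),
          Real.sqrt_sq zero_le_two, mul_comm]
    _ ≤ _ := by linarith

-- `13/4 = 3 + 1/4`: the cross term is paid for by `2s < 3`, the square term by `ε < 1/4`.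
theorem sq_add_mul_sq_lt {ε s h δ : ℝ} (hε0 : 0 < ε) (hε : ε < 1 / 4) (hs : 0 < s)
    (hs3 : 2 * s < 3) (hsh : s ^ 2 < 2 * h ^ 2) (hδ : 13 * ε / 2 ≤ δ ^ 2) :
    (s ^ 2 + ε * s) ^ 2 < (s ^ 2) ^ 2 + (h * δ) ^ 2 := by
  have hgain : 13 * ε * s ^ 2 / 4 < (h * δ) ^ 2 := by
    have hδ0 : 0 < δ ^ 2 := by linarith
    calc 13 * ε * s ^ 2 / 4 ≤ s ^ 2 / 2 * δ ^ 2 := by nlinarith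
      _ < h ^ 2 * δ ^ 2 := by gcongr; linarith
      _ = (h * δ) ^ 2 := by ring
  have hcross : 2 * ε * s ^ 3 < 3 * ε * s ^ 2 := by
    have := mul_lt_mul_of_pos_left hs3 (by positivity : 0 < ε * s ^ 2)
    linarith
  have hsq : ε ^ 2 * s ^ 2 < ε * s ^ 2 / 4 := by
    have := mul_lt_mul_of_pos_left hε (by positivity : 0 < ε * s ^ 2)
    linarith
  nlinarith

theorem two_mul_sqrt_add_lt_sqrt_add_sqrt {ε a h δ : ℝ} (hε0 : 0 < ε) (hε : ε < 1 / 4)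
    (ha : 0 < a) (hah : a < h) (hper : 2 * √(a ^ 2 + h ^ 2) < 3) (hδ : 13 * ε / 2 ≤ δ ^ 2) :
    2 * √(a ^ 2 + h ^ 2) + 2 * ε < √((a + δ) ^ 2 + h ^ 2) + √((a - δ) ^ 2 + h ^ 2) := by
  set s := √(a ^ 2 + h ^ 2)
  have hs : 0 < s := Real.sqrt_pos.mpr (by positivity)
  have hs2 : s ^ 2 = a ^ 2 + h ^ 2 := Real.sq_sqrt (by positivity)
  have hsh : s ^ 2 < 2 * h ^ 2 := by nlinarith
  have hgain : s ^ 2 + ε * s < √((a ^ 2 + h ^ 2) ^ 2 + (h * δ) ^ 2) := by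
    rw [← hs2]
    exact Real.lt_sqrt_of_sq_lt (sq_add_mul_sq_lt hε0 hε hs hper hsh hδ)
  refine lt_of_mul_lt_mul_left ?_ hs.le
  calc s * (2 * s + 2 * ε) = 2 * (s ^ 2 + ε * s) := by ring
    _ < 2 * √((a ^ 2 + h ^ 2) ^ 2 + (h * δ) ^ 2) := by linarith
    _ ≤ _ := two_mul_sqrt_le_mul_sqrt_add_sqrt a h δ

theorem dist_equiv_symm_fin_two (x₁ y₁ x₂ y₂ : ℝ) :
    dist ((WithLp.equiv 2 (Fin 2 → ℝ)).symm ![x₁, y₁])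
        ((WithLp.equiv 2 (Fin 2 → ℝ)).symm ![x₂, y₂]) =
      √((x₁ - x₂) ^ 2 + (y₁ - y₂) ^ 2) := by
  simp [EuclideanSpace.dist_eq, Fin.sum_univ_two, Real.dist_eq, sq_abs]

/-- **Perturbing an isosceles triangle.** Let `0 < ε < 1/4`, `b > 0`, `h > b/2`, and
`√(b² + 4h²) < 3`. In the plane set `p₁ = (0,0)`, `p₂ = (b,0)`, `q* = (b/2, −h)`,
`q = (b/2 + δ, −h)`; then `dist p₁ q* + dist p₂ q* = √(b² + 4h²)`. If
`|δ| ≥ √(13ε/2)`, then `dist p₁ q + dist p₂ q > √(b² + 4h²) + 2ε`. -/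
theorem perturbed_isosceles_triangle
    (ε b h δ : ℝ) (hε0 : 0 < ε) (hε : ε < 1 / 4)
    (hb : 0 < b) (hh : b / 2 < h)
    (hper : Real.sqrt (b ^ 2 + 4 * h ^ 2) < 3)
    (hδ : |δ| ≥ Real.sqrt (13 * ε / 2)) :
    dist ((WithLp.equiv 2 (Fin 2 → ℝ)).symm ![(0 : ℝ), 0])
        ((WithLp.equiv 2 (Fin 2 → ℝ)).symm ![b / 2 + δ, -h]) +
      dist ((WithLp.equiv 2 (Fin 2 → ℝ)).symm ![b, (0 : ℝ)])
        ((WithLp.equiv 2 (Fin 2 → ℝ)).symm ![b / 2 + δ, -h]) >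
      Real.sqrt (b ^ 2 + 4 * h ^ 2) + 2 * ε := by
  have hbase : √(b ^ 2 + 4 * h ^ 2) = 2 * √((b / 2) ^ 2 + h ^ 2) := by
    rw [show b ^ 2 + 4 * h ^ 2 = 2 ^ 2 * ((b / 2) ^ 2 + h ^ 2) by ring,
      Real.sqrt_mul' _ (by positivity), Real.sqrt_sq zero_le_two]
  have hδ2 : 13 * ε / 2 ≤ δ ^ 2 := by
    rw [← sq_abs]
    exact (Real.sqrt_le_left (abs_nonneg δ)).1 hδ
  rw [dist_equiv_symm_fin_two, dist_equiv_symm_fin_two, hbase]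
  rw [hbase] at hper
  convert two_mul_sqrt_add_lt_sqrt_add_sqrt hε0 hε (half_pos hb) hh hper hδ2 using 3 <;> ring
end

section
/- Let 0 < ε < 1/4 and 0 < L < 3. Let I : ℝ → ℝ³ be a differentiable curve with ‖derivative of I at t‖ = 1 for all t ∈ [0, L] (a unit-speed curve, so its arc length over [0, L] equals L). Let I* : ℝ → ℝ³ be the affine map I*(t) = I(0) + (t/L) • (I(L) − I(0)), which agrees with I at the endpoints 0 and L. If there exists p ∈ [0, L] with ‖I(p) − I*(p)‖ ≥ 3√ε, then L > ‖I(L) − I(0)‖ + ε. -/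
/-!
Write `A = I 0`, `B = I L`, `P = I p`, `s = p / L`. Since `I` is 1-Lipschitz on `[0, L]`,
`‖P - A‖ ≤ s L` and `‖B - P‖ ≤ (1 - s) L`. Stewart's identity
`(1 - s)‖P - A‖² + s‖B - P‖² = ‖P - I* p‖² + s(1 - s)‖B - A‖²` then gives
`9ε ≤ ‖P - I* p‖² ≤ s(1 - s)(L² - ‖B - A‖²) ≤ (L - ‖B - A‖)(L + ‖B - A‖) / 4`,
which is impossible if `L ≤ ‖B - A‖ + ε` and `L < 3`.
-/

open Set

section Lipschitz

variable {E : Type*} [NormedAddCommGroup E] [NormedSpace ℝ E]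

theorem norm_sub_le_sub_of_norm_deriv_le_one {f : ℝ → E} {a b x y : ℝ}
    (hf : ∀ t ∈ Icc a b, DifferentiableAt ℝ f t) (hf' : ∀ t ∈ Icc a b, ‖deriv f t‖ ≤ 1)
    (hx : x ∈ Icc a b) (hy : y ∈ Icc a b) (hxy : x ≤ y) :
    ‖f y - f x‖ ≤ y - x := by
  have h := (convex_Icc a b).norm_image_sub_le_of_norm_deriv_le hf hf' hx hy
  rwa [one_mul, Real.norm_of_nonneg (sub_nonneg.2 hxy)] at h

end Lipschitz

section Stewart

variable {E : Type*} [NormedAddCommGroup E] [InnerProductSpace ℝ E]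

theorem one_sub_mul_norm_sub_sq_add_mul_norm_sub_sq (A B P : E) (s : ℝ) :
    (1 - s) * ‖P - A‖ ^ 2 + s * ‖B - P‖ ^ 2 =
      ‖P - (A + s • (B - A))‖ ^ 2 + s * (1 - s) * ‖B - A‖ ^ 2 := by
  have hPA : P - A = s • (B - A) + (P - (A + s • (B - A))) := by abel
  have hBP : B - P = (1 - s) • (B - A) - (P - (A + s • (B - A))) := by module
  rw [hPA, hBP]
  generalize P - (A + s • (B - A)) = w
  generalize B - A = u
  rw [norm_add_sq_real, norm_sub_sq_real, real_inner_smul_left, real_inner_smul_left,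
    norm_smul, norm_smul, Real.norm_eq_abs, Real.norm_eq_abs, mul_pow, mul_pow, sq_abs, sq_abs]
  ring

theorem norm_sub_chord_sq_le {A B P : E} {s M : ℝ} (hs0 : 0 ≤ s) (hs1 : s ≤ 1)
    (hPA : ‖P - A‖ ≤ s * M) (hBP : ‖B - P‖ ≤ (1 - s) * M) :
    ‖P - (A + s • (B - A))‖ ^ 2 ≤ s * (1 - s) * (M ^ 2 - ‖B - A‖ ^ 2) := by
  have hPA2 := pow_le_pow_left₀ (norm_nonneg _) hPA 2
  have hBP2 := pow_le_pow_left₀ (norm_nonneg _) hBP 2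
  have h := one_sub_mul_norm_sub_sq_add_mul_norm_sub_sq A B P s
  nlinarith [mul_le_mul_of_nonneg_left hPA2 (sub_nonneg.2 hs1),
    mul_le_mul_of_nonneg_left hBP2 hs0]

end Stewart

theorem perturbed_affine_map_general
    (ε L : ℝ) (hε0 : 0 < ε) (hL0 : 0 < L) (hL : L < 3)
    (I : ℝ → EuclideanSpace ℝ (Fin 3))
    (hdiff : Differentiable ℝ I)
    (hspeed : ∀ t ∈ Set.Icc (0 : ℝ) L, ‖deriv I t‖ = 1)
    (p : ℝ) (hp : p ∈ Set.Icc (0 : ℝ) L)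
    (hfar : ‖I p - (I 0 + (p / L) • (I L - I 0))‖ ≥ 3 * Real.sqrt ε) :
    L > ‖I L - I 0‖ + ε := by
  by_contra! hLd
  have hlip {x y : ℝ} (hx : x ∈ Icc 0 L) (hy : y ∈ Icc 0 L) (hxy : x ≤ y) :
      ‖I y - I x‖ ≤ y - x :=
    norm_sub_le_sub_of_norm_deriv_le_one (fun t _ => hdiff t) (fun t ht => (hspeed t ht).le)
      hx hy hxy
  set s := p / L
  have hps : p = s * L := (div_mul_cancel₀ p hL0.ne').symm
  have hs0 : 0 ≤ s := div_nonneg hp.1 hL0.le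
  have hs1 : s ≤ 1 := (div_le_one hL0).2 hp.2
  have hPA : ‖I p - I 0‖ ≤ s * L := by
    simpa [← hps] using hlip (left_mem_Icc.2 hL0.le) hp hp.1
  have hBP : ‖I L - I p‖ ≤ (1 - s) * L := by
    simpa [sub_mul, ← hps] using hlip hp (right_mem_Icc.2 hL0.le) hp.2
  have hfar2 : 9 * ε ≤ ‖I p - (I 0 + s • (I L - I 0))‖ ^ 2 := by
    have := pow_le_pow_left₀ (by positivity) hfar 2
    rw [mul_pow, Real.sq_sqrt hε0.le] at this
    linarith
  set d := ‖I L - I 0‖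
  have hsq : 9 * ε ≤ s * (1 - s) * (L ^ 2 - d ^ 2) :=
    hfar2.trans (norm_sub_chord_sq_le hs0 hs1 hPA hBP)
  have hq : s * (1 - s) ≤ 1 / 4 := by nlinarith [sq_nonneg (2 * s - 1)]
  have hdL2 : 0 < L ^ 2 - d ^ 2 := by
    by_contra! h
    nlinarith [mul_nonneg hs0 (sub_nonneg.2 hs1)]
  have hdL : d ≤ L := by nlinarith [norm_nonneg (I L - I 0)]
  nlinarith [norm_nonneg (I L - I 0)]

/-- **Perturbing an affine map.** Let `0 < ε < 1/4` and `0 < L < 3`. Let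
`I : ℝ → ℝ³` be a differentiable unit-speed curve on `[0, L]` and let
`I* t = I 0 + (t/L) • (I L − I 0)` be the affine interpolation agreeing with `I`
at the endpoints. If `‖I p − I* p‖ ≥ 3√ε` for some `p ∈ [0, L]`, then
`L > ‖I L − I 0‖ + ε`. -/
theorem perturbed_affine_map
    (ε L : ℝ) (hε0 : 0 < ε) (hε : ε < 1 / 4) (hL0 : 0 < L) (hL : L < 3)
    (I : ℝ → EuclideanSpace ℝ (Fin 3))
    (hdiff : Differentiable ℝ I)
    (hspeed : ∀ t ∈ Set.Icc (0 : ℝ) L, ‖deriv I t‖ = 1)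
    (p : ℝ) (hp : p ∈ Set.Icc (0 : ℝ) L)
    (hfar : ‖I p - (I 0 + (p / L) • (I L - I 0))‖ ≥ 3 * Real.sqrt ε) :
    L > ‖I L - I 0‖ + ε :=
  perturbed_affine_map_general ε L hε0 hL0 hL I hdiff hspeed p hp hfar
end

section
/- Let a, b, c be points of the Euclidean plane ℝ² with a ≠ b, and let s = Metric.infDist c (affineSpan ℝ {a, b}) be the distance from c to the line through a and b. Then dist(a, c) + dist(b, c) ≥ √((dist(a, b))² + 4s²). In particular, a triangle with base of length β and height at least 1 has the sum of its two non-base side lengths greater than or equal to √(β² + 4). -/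
lemma sqrt_aux (x y s : ℝ) (hx : 0 ≤ x) (hy : 0 ≤ y) :
    Real.sqrt ((x + y) ^ 2 + 4 * s ^ 2) ≤ Real.sqrt (x ^ 2 + s ^ 2) + Real.sqrt (y ^ 2 + s ^ 2) := by
  have hA : (0:ℝ) ≤ x ^ 2 + s ^ 2 := by positivity
  have hB : (0:ℝ) ≤ y ^ 2 + s ^ 2 := by positivity
  have h1 : x * y + s ^ 2 ≤ Real.sqrt ((x ^ 2 + s ^ 2) * (y ^ 2 + s ^ 2)) := by
    rw [Real.le_sqrt (by positivity) (by positivity)]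
    nlinarith [sq_nonneg (x * s - y * s)]
  have hS : 0 ≤ Real.sqrt (x ^ 2 + s ^ 2) + Real.sqrt (y ^ 2 + s ^ 2) := by positivity
  rw [show Real.sqrt (x ^ 2 + s ^ 2) + Real.sqrt (y ^ 2 + s ^ 2)
      = Real.sqrt ((Real.sqrt (x ^ 2 + s ^ 2) + Real.sqrt (y ^ 2 + s ^ 2)) ^ 2) from
    (Real.sqrt_sq hS).symm]
  apply Real.sqrt_le_sqrt
  have hA' := Real.sq_sqrt hA
  have hB' := Real.sq_sqrt hB
  have hmul : Real.sqrt (x ^ 2 + s ^ 2) * Real.sqrt (y ^ 2 + s ^ 2)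
      = Real.sqrt ((x ^ 2 + s ^ 2) * (y ^ 2 + s ^ 2)) := (Real.sqrt_mul hA _).symm
  nlinarith [h1]

/-- For `a ≠ b` in the plane and `s` the distance from `c` to the line through
`a` and `b`, `dist a c + dist b c ≥ √(dist a b² + 4s²)`. In particular, if the
height `s` is at least `1`, then `dist a c + dist b c ≥ √(dist a b² + 4)`. -/
theorem side_sum_lower_bound
    (a b c : EuclideanSpace ℝ (Fin 2)) (hab : a ≠ b)
    (s : ℝ) (hs : s = Metric.infDist c (affineSpan ℝ {a, b} : Set (EuclideanSpace ℝ (Fin 2)))) :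
    dist a c + dist b c ≥ Real.sqrt (dist a b ^ 2 + 4 * s ^ 2) ∧
    (1 ≤ s → dist a c + dist b c ≥ Real.sqrt (dist a b ^ 2 + 4)) := by
  set L : AffineSubspace ℝ (EuclideanSpace ℝ (Fin 2)) := affineSpan ℝ {a, b} with hL
  have haL : a ∈ L := mem_affineSpan ℝ (by simp)
  have hbL : b ∈ L := mem_affineSpan ℝ (by simp)
  haveI : Nonempty L := ⟨⟨a, haL⟩⟩
  set p : EuclideanSpace ℝ (Fin 2) := (EuclideanGeometry.orthogonalProjection L c : EuclideanSpace ℝ (Fin 2)) with hp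
  have hpL : p ∈ L := (EuclideanGeometry.orthogonalProjection L c).2
  -- s = dist c p
  have hscp : s = dist c p := by
    apply le_antisymm
    · rw [hs]; exact Metric.infDist_le_dist_of_mem hpL
    · rw [hs]
      by_contra hlt
      push_neg at hlt
      obtain ⟨q, hq, hdq⟩ := (Metric.infDist_lt_iff ⟨a, haL⟩).mp hlt
      have h := EuclideanGeometry.dist_sq_eq_dist_orthogonalProjection_sq_add_dist_orthogonalProjection_sq (s := L) c hq
      rw [← hp] at h
      have hcq : dist c q = dist q c := dist_comm c q
      nlinarith [dist_nonneg (x := q) (y := p), dist_nonneg (x := c) (y := p),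
        dist_nonneg (x := c) (y := q)]
  have hsnn : 0 ≤ s := hscp ▸ dist_nonneg
  set x := dist a p with hx
  set y := dist b p with hy
  have h1 : dist a c ^ 2 = x ^ 2 + s ^ 2 := by
    have h := EuclideanGeometry.dist_sq_eq_dist_orthogonalProjection_sq_add_dist_orthogonalProjection_sq (s := L) c haL
    rw [← hp] at h
    rw [hscp]; nlinarith
  have h2 : dist b c ^ 2 = y ^ 2 + s ^ 2 := by
    have h := EuclideanGeometry.dist_sq_eq_dist_orthogonalProjection_sq_add_dist_orthogonalProjection_sq (s := L) c hbL
    rw [← hp] at h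
    rw [hscp]; nlinarith
  have hac : dist a c = Real.sqrt (x ^ 2 + s ^ 2) := by
    rw [← h1, Real.sqrt_sq dist_nonneg]
  have hbc : dist b c = Real.sqrt (y ^ 2 + s ^ 2) := by
    rw [← h2, Real.sqrt_sq dist_nonneg]
  have htri : dist a b ≤ x + y := by
    calc dist a b ≤ dist a p + dist p b := dist_triangle a p b
    _ = x + y := by rw [dist_comm p b]
  have hxnn : (0:ℝ) ≤ x := dist_nonneg
  have hynn : (0:ℝ) ≤ y := dist_nonneg
  have key : Real.sqrt (dist a b ^ 2 + 4 * s ^ 2) ≤ dist a c + dist b c := by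
    calc Real.sqrt (dist a b ^ 2 + 4 * s ^ 2)
        ≤ Real.sqrt ((x + y) ^ 2 + 4 * s ^ 2) := by
          apply Real.sqrt_le_sqrt
          have : dist a b ^ 2 ≤ (x + y) ^ 2 := by
            apply pow_le_pow_left₀ dist_nonneg htri _
          linarith
      _ ≤ Real.sqrt (x ^ 2 + s ^ 2) + Real.sqrt (y ^ 2 + s ^ 2) := sqrt_aux x y s hxnn hynn
      _ = dist a c + dist b c := by rw [hac, hbc]
  refine ⟨key, fun hs1 => ?_⟩
  calc Real.sqrt (dist a b ^ 2 + 4)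
      ≤ Real.sqrt (dist a b ^ 2 + 4 * s ^ 2) := by
        apply Real.sqrt_le_sqrt
        nlinarith
    _ ≤ dist a c + dist b c := key
end

section
/- For every real number t, max(√(1 + t²) + t, √(5 + t²) − t) ≥ √3, with equality if and only if t = 1/√3. -/
/-- For every real `t`, `max(√(1+t²)+t, √(5+t²)−t) ≥ √3`, with equality iff `t = 1/√3`. -/
theorem max_h_d_ge_sqrt_three (t : ℝ) :
    max (Real.sqrt (1 + t ^ 2) + t) (Real.sqrt (5 + t ^ 2) - t) ≥ Real.sqrt 3 ∧
    (max (Real.sqrt (1 + t ^ 2) + t) (Real.sqrt (5 + t ^ 2) - t) = Real.sqrt 3 ↔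
      t = 1 / Real.sqrt 3) := by
  set s := Real.sqrt 3 with hs
  set u := Real.sqrt (1 + t ^ 2) with hu
  set v := Real.sqrt (5 + t ^ 2) with hv
  have hs2 : s ^ 2 = 3 := Real.sq_sqrt (by norm_num)
  have hs0 : 0 < s := Real.sqrt_pos.mpr (by norm_num)
  have hu2 : u ^ 2 = 1 + t ^ 2 := Real.sq_sqrt (by positivity)
  have hv2 : v ^ 2 = 5 + t ^ 2 := Real.sq_sqrt (by positivity)
  have hu0 : 0 ≤ u := Real.sqrt_nonneg _
  have hv0 : 0 ≤ v := Real.sqrt_nonneg _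
  -- if u + t ≤ s then t ≤ 1/s
  have h3 : u + t ≤ s → t ≤ 1 / s := by
    intro h
    rw [le_div_iff₀ hs0]
    have hst : 0 ≤ s - t - u := by linarith
    have hst' : 0 ≤ s - t + u := by linarith
    nlinarith [mul_nonneg hst hst']
  -- if v - t ≤ s then 1/s ≤ t
  have h4 : v - t ≤ s → 1 / s ≤ t := by
    intro h
    rw [div_le_iff₀ hs0]
    have hst : 0 ≤ s + t - v := by linarith
    have hst' : 0 ≤ s + t + v := by linarith
    nlinarith [mul_nonneg hst hst']
  -- at t = 1/s, both expressions equal s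
  have heq : t = 1 / s → u + t = s ∧ v - t = s := by
    intro h
    have ht2 : t ^ 2 = 1 / 3 := by
      rw [h, div_pow, hs2]; norm_num
    have hus : u = 2 / s := by
      have : u = Real.sqrt ((2 / s) ^ 2) := by
        rw [hu]; congr 1; rw [ht2, div_pow, hs2]; norm_num
      rw [this, Real.sqrt_sq (by positivity)]
    have hvs : v = 4 / s := by
      have : v = Real.sqrt ((4 / s) ^ 2) := by
        rw [hv]; congr 1; rw [ht2, div_pow, hs2]; norm_num
      rw [this, Real.sqrt_sq (by positivity)]
    constructor
    · rw [hus, h]; field_simp; nlinarith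
    · rw [hvs, h]; field_simp; nlinarith
  constructor
  · rcases le_total t (1 / s) with h | h
    · refine le_trans ?_ (le_max_right _ _)
      by_contra hc
      push_neg at hc
      have := h4 hc.le
      rcases eq_or_lt_of_le h with he | hlt
      · have := (heq he).2; linarith
      · linarith
    · refine le_trans ?_ (le_max_left _ _)
      by_contra hc
      push_neg at hc
      have := h3 hc.le
      rcases eq_or_lt_of_le h with he | hlt
      · have := (heq he.symm).1; linarith
      · linarith
  · constructor
    · intro hm
      have hf : u + t ≤ s := hm ▸ le_max_left _ _
      have hg : v - t ≤ s := hm ▸ le_max_right _ _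
      exact le_antisymm (h3 hf) (h4 hg)
    · intro h
      obtain ⟨e1, e2⟩ := heq h
      rw [e1, e2, max_self]
end

section
/- For all real numbers t and all y ≥ 0, max(√(1 + t²) + t, √(1 + t² + 4y²) − t) ≥ √(1 + 2y²). -/
/-- For all real `t` and all `y ≥ 0`,
`max(√(1+t²)+t, √(1+t²+4y²)−t) ≥ √(1+2y²)`. -/
theorem max_h_dy_ge (t y : ℝ) (hy : 0 ≤ y) :
    max (Real.sqrt (1 + t ^ 2) + t) (Real.sqrt (1 + t ^ 2 + 4 * y ^ 2) - t) ≥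
      Real.sqrt (1 + 2 * y ^ 2) := by
  set s := Real.sqrt (1 + 2 * y ^ 2) with hs
  have hs0 : 0 ≤ s := Real.sqrt_nonneg _
  have hs2 : s ^ 2 = 1 + 2 * y ^ 2 := Real.sq_sqrt (by positivity)
  by_cases h : s ≤ Real.sqrt (1 + t ^ 2) + t
  · exact le_max_of_le_left h
  · push_neg at h
    have h1 : Real.sqrt (1 + t ^ 2) < s - t := by linarith
    have hsq : (Real.sqrt (1 + t ^ 2)) ^ 2 = 1 + t ^ 2 :=
      Real.sq_sqrt (by positivity)
    have h2 : (Real.sqrt (1 + t ^ 2)) ^ 2 < (s - t) ^ 2 :=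
      pow_lt_pow_left₀ h1 (Real.sqrt_nonneg _) two_ne_zero
    have ht : t * s < y ^ 2 := by nlinarith
    have hr : s + t ≤ Real.sqrt (1 + t ^ 2 + 4 * y ^ 2) := by
      rcases le_or_gt (s + t) 0 with hc | hc
      · exact hc.trans (Real.sqrt_nonneg _)
      · rw [show Real.sqrt (1 + t ^ 2 + 4 * y ^ 2)
            = Real.sqrt (1 + t ^ 2 + 4 * y ^ 2) from rfl]
        rw [Real.le_sqrt hc.le (by positivity)]
        nlinarith
    exact le_max_of_le_right (by linarith)
end

section
/- Let 0 < ε ≤ 1/4 and let t be a real number with max(√(1 + t²) + t, √(5 + t²) − t) < √3 + ε. Then |t − 1/√3| < 4ε/3; in particular 0 < t < 1. -/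
set_option maxHeartbeats 1000000 in
/-- If `0 < ε ≤ 1/4` and `max(√(1+t²)+t, √(5+t²)−t) < √3 + ε`, then
`|t − 1/√3| < 4ε/3`; in particular `0 < t < 1`. -/
theorem t_near_t_zero (ε t : ℝ) (hε0 : 0 < ε) (hε : ε ≤ 1 / 4)
    (ht : max (Real.sqrt (1 + t ^ 2) + t) (Real.sqrt (5 + t ^ 2) - t) <
      Real.sqrt 3 + ε) :
    |t - 1 / Real.sqrt 3| < 4 * ε / 3 ∧ 0 < t ∧ t < 1 := by
  have h1 := max_lt_iff.mp ht
  obtain ⟨ha, hb⟩ := h1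
  set s1 := Real.sqrt (1 + t ^ 2) with hs1
  set s2 := Real.sqrt (5 + t ^ 2) with hs2
  set s3 := Real.sqrt 3 with hs3
  have hs1n : 0 ≤ s1 := Real.sqrt_nonneg _
  have hs2n : 0 ≤ s2 := Real.sqrt_nonneg _
  have hs3n : 0 ≤ s3 := Real.sqrt_nonneg _
  have hq1 : s1 ^ 2 = 1 + t ^ 2 := Real.sq_sqrt (by positivity)
  have hq2 : s2 ^ 2 = 5 + t ^ 2 := Real.sq_sqrt (by positivity)
  have hq3 : s3 ^ 2 = 3 := Real.sq_sqrt (by norm_num)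
  have hs3pos : (1:ℝ) < s3 := by nlinarith
  have hs3lt : s3 < 2 := by nlinarith
  -- key linear lower bounds
  have key1 : s3 + t ≤ 2 * s1 := by
    rcases le_or_gt (s3 + t) 0 with h | h
    · linarith
    · have : (s3 + t) / 2 ≤ s1 := by
        rw [hs1, show (1 + t ^ 2) = ((1 + t ^ 2 : ℝ)) from rfl]
        rw [← Real.sqrt_sq (by positivity : (0:ℝ) ≤ (s3 + t) / 2)]
        apply Real.sqrt_le_sqrt
        nlinarith [sq_nonneg (s3 * t - 1)]
      linarith
  have key2 : 5 * s3 + t ≤ 4 * s2 := by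
    rcases le_or_gt (5 * s3 + t) 0 with h | h
    · linarith
    · have : (5 * s3 + t) / 4 ≤ s2 := by
        rw [hs2, ← Real.sqrt_sq (by positivity : (0:ℝ) ≤ (5 * s3 + t) / 4)]
        apply Real.sqrt_le_sqrt
        nlinarith [sq_nonneg (s3 * t - 1)]
      linarith
  have hinv : 1 / s3 = s3 / 3 := by
    field_simp
    nlinarith
  rw [hinv]
  have hlt : t - s3 / 3 < 4 * ε / 3 := by nlinarith
  have hgt : s3 / 3 - t < 4 * ε / 3 := by nlinarith
  refine ⟨abs_lt.mpr ⟨by linarith, hlt⟩, by nlinarith, by nlinarith⟩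
end
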